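/- In the Set-Cover reduction graph, if there exists a set cover of size p then there exists a routing tree of lifetime 1 in the unaggregated model: route the p chosen set-nodes and all n element-nodes through the second-row node of energy p+n+1, and route the remaining k−p set-nodes and all k third-row nodes through the second-row node of energy 2k−p+1; every node's outflow (subtree size) is at most its energy. -/
import Mathlib


open scoped Classical

/-- A routing tree on a communication graph `G` rooted at `root`: each non-root
node has a parent it is adjacent to, and iterating the parent map reaches the root. -/
structure RoutingTree {V : Type*} [Fintype V] (G : SimpleGraph V) (root : V) where
  parent : V → V
  parent_root : parent root = root
  adj_parent : ∀ i, i ≠ root → G.Adj i (parent i)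
  reaches_root : ∀ i, ∃ k, parent^[k] i = root

namespace RoutingTree

variable {V : Type*} [Fintype V] {G : SimpleGraph V} {root : V}

/-- Number of vertices in the subtree rooted at `i`. -/
noncomputable def subtreeSize (T : RoutingTree G root) (i : V) : ℕ :=
  {j : V | ∃ k, T.parent^[k] j = i}.ncard

/-- Number of children of `i` in the routing tree. -/
noncomputable def numChildren (T : RoutingTree G root) (i : V) : ℕ :=
  {j : V | j ≠ root ∧ T.parent j = i}.ncard

end RoutingTree

/-- Vertex type of the Set-Cover reduction graph: the root, two second-row
nodes (indexed by `Bool`), `k` third-row nodes, `k` set-nodes and `n`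
element-nodes. -/
abbrev RV (k n : ℕ) := Unit ⊕ (Bool ⊕ (Fin k ⊕ (Fin k ⊕ Fin n)))

/-- Adjacency of the reduction graph: the root is adjacent to both row-2 nodes;
the row-2 node `false` (energy `2k−p+1`) is adjacent to all row-3 nodes; row-3
node `i` is adjacent to set-node `i`; the row-2 node `true` (energy `p+n+1`) is
adjacent to all set-nodes; and element `j` is adjacent to set-node `i` iff
`j ∈ S i`. -/
def redAdj {k n : ℕ} (S : Fin k → Finset (Fin n)) : RV k n → RV k n → Prop
  | Sum.inl _, Sum.inr (Sum.inl _) => True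
  | Sum.inr (Sum.inl b), Sum.inr (Sum.inr (Sum.inl _)) => b = false
  | Sum.inr (Sum.inr (Sum.inl i)), Sum.inr (Sum.inr (Sum.inr (Sum.inl i'))) => i = i'
  | Sum.inr (Sum.inl b), Sum.inr (Sum.inr (Sum.inr (Sum.inl _))) => b = true
  | Sum.inr (Sum.inr (Sum.inr (Sum.inl i))), Sum.inr (Sum.inr (Sum.inr (Sum.inr j))) => j ∈ S i
  | _, _ => False

/-- The Set-Cover reduction graph. -/
def redGraph {k n : ℕ} (S : Fin k → Finset (Fin n)) : SimpleGraph (RV k n) :=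
  SimpleGraph.fromRel (redAdj S)

/-- Node energies in the reduction graph. -/
def energy (k n p : ℕ) (S : Fin k → Finset (Fin n)) : RV k n → ℕ
  | Sum.inl _ => 0
  | Sum.inr (Sum.inl false) => 2 * k - p + 1
  | Sum.inr (Sum.inl true) => p + n + 1
  | Sum.inr (Sum.inr (Sum.inl _)) => 2
  | Sum.inr (Sum.inr (Sum.inr (Sum.inl i))) => (S i).card + 1
  | Sum.inr (Sum.inr (Sum.inr (Sum.inr _))) => 1

section Aux
variable {k n : ℕ}

def myParent (P : Finset (Fin k)) (c : Fin n → Fin k) : RV k n → RV k n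
  | Sum.inl _ => Sum.inl ()
  | Sum.inr (Sum.inl _) => Sum.inl ()
  | Sum.inr (Sum.inr (Sum.inl _)) => Sum.inr (Sum.inl false)
  | Sum.inr (Sum.inr (Sum.inr (Sum.inl i))) =>
      if i ∈ P then Sum.inr (Sum.inl true) else Sum.inr (Sum.inr (Sum.inl i))
  | Sum.inr (Sum.inr (Sum.inr (Sum.inr j))) => Sum.inr (Sum.inr (Sum.inr (Sum.inl (c j))))

def ancSet (P : Finset (Fin k)) (c : Fin n → Fin k) : RV k n → Set (RV k n)
  | Sum.inl _ => {Sum.inl ()}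
  | Sum.inr (Sum.inl b) => {Sum.inr (Sum.inl b), Sum.inl ()}
  | Sum.inr (Sum.inr (Sum.inl i)) =>
      {Sum.inr (Sum.inr (Sum.inl i)), Sum.inr (Sum.inl false), Sum.inl ()}
  | Sum.inr (Sum.inr (Sum.inr (Sum.inl i))) =>
      if i ∈ P then {Sum.inr (Sum.inr (Sum.inr (Sum.inl i))), Sum.inr (Sum.inl true), Sum.inl ()}
      else {Sum.inr (Sum.inr (Sum.inr (Sum.inl i))), Sum.inr (Sum.inr (Sum.inl i)),
            Sum.inr (Sum.inl false), Sum.inl ()}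
  | Sum.inr (Sum.inr (Sum.inr (Sum.inr j))) =>
      {Sum.inr (Sum.inr (Sum.inr (Sum.inr j))), Sum.inr (Sum.inr (Sum.inr (Sum.inl (c j)))),
       Sum.inr (Sum.inl true), Sum.inl ()}

lemma self_mem_ancSet (P : Finset (Fin k)) (c : Fin n → Fin k) (x : RV k n) :
    x ∈ ancSet P c x := by
  rcases x with _ | (b | (i | (i | j))) <;> simp [ancSet]
  by_cases h : i ∈ P <;> simp [h]

lemma anc_closed (P : Finset (Fin k)) (c : Fin n → Fin k) (hc : ∀ j, c j ∈ P)
    (x : RV k n) : ∀ y ∈ ancSet P c x, myParent P c y ∈ ancSet P c x := by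
  rcases x with _ | (b | (i | (i | j)))
  · intro y hy; simp [ancSet] at hy ⊢; subst hy; simp [myParent]
  · intro y hy; simp [ancSet] at hy ⊢
    rcases hy with rfl | rfl <;> simp [myParent]
  · intro y hy; simp [ancSet] at hy ⊢
    rcases hy with rfl | rfl | rfl <;> simp [myParent]
  · by_cases h : i ∈ P
    · intro y hy; simp [ancSet, h] at hy ⊢
      rcases hy with rfl | rfl | rfl <;> simp [myParent, h]
    · intro y hy; simp [ancSet, h] at hy ⊢
      rcases hy with rfl | rfl | rfl | rfl <;> simp [myParent, h]
  · intro y hy; simp [ancSet] at hy ⊢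
    rcases hy with rfl | rfl | rfl | rfl <;> simp [myParent, hc j]

lemma iterate_mem_ancSet (P : Finset (Fin k)) (c : Fin n → Fin k) (hc : ∀ j, c j ∈ P)
    (m : ℕ) (x : RV k n) : (myParent P c)^[m] x ∈ ancSet P c x := by
  induction m with
  | zero => exact self_mem_ancSet P c x
  | succ m ih =>
      rw [Function.iterate_succ_apply']
      exact anc_closed P c hc x _ ih

end Aux
/-- If there is a set cover of size `p`, then the reduction graph admits a
routing tree of lifetime `1` in the unaggregated model, i.e. a routing tree in
which every non-root node's outflow (subtree size) is at most its energy. -/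
theorem stmt17 (n k p : ℕ) (S : Fin k → Finset (Fin n)) (hp : p ≤ k)
    (hcov : ∃ P : Finset (Fin k), P.card = p ∧ ∀ j : Fin n, ∃ i ∈ P, j ∈ S i) :
    ∃ T : RoutingTree (redGraph S) (Sum.inl () : RV k n),
      ∀ v, v ≠ (Sum.inl () : RV k n) → T.subtreeSize v ≤ energy k n p S v := by
  classical
  obtain ⟨P, hPcard, hPcov⟩ := hcov
  choose c hcP hcS using hPcov
  have hroot : myParent P c (Sum.inl () : RV k n) = Sum.inl () := by simp [myParent]
  have hadj : ∀ i : RV k n, i ≠ Sum.inl () → (redGraph S).Adj i (myParent P c i) := by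
    intro i hi
    rcases i with _ | (b | (i | (i | j)))
    · exact absurd rfl hi
    · simp [myParent, redGraph, SimpleGraph.fromRel_adj, redAdj]
    · simp [myParent, redGraph, SimpleGraph.fromRel_adj, redAdj]
    · by_cases h : i ∈ P <;>
        simp [myParent, h, redGraph, SimpleGraph.fromRel_adj, redAdj]
    · simp [myParent, redGraph, SimpleGraph.fromRel_adj, redAdj, hcS j]
  have hreach : ∀ i : RV k n, ∃ m, (myParent P c)^[m] i = Sum.inl () := by
    intro i
    refine ⟨4, ?_⟩
    rcases i with _ | (b | (i | (i | j)))
    · simp [Function.iterate_succ_apply, myParent]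
    · simp [Function.iterate_succ_apply, myParent]
    · simp [Function.iterate_succ_apply, myParent]
    · by_cases h : i ∈ P <;> simp [Function.iterate_succ_apply, myParent, h]
    · simp [Function.iterate_succ_apply, myParent, hcP j]
  refine ⟨⟨myParent P c, hroot, hadj, hreach⟩, ?_⟩
  intro v hv
  have hsub : {x : RV k n | ∃ m, (myParent P c)^[m] x = v} ⊆
      {x : RV k n | v ∈ ancSet P c x} := by
    rintro x ⟨m, rfl⟩
    exact iterate_mem_ancSet P c hcP m x
  have key : ∀ F : Finset (RV k n), {x : RV k n | v ∈ ancSet P c x} ⊆ ↑F →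
      ({x : RV k n | ∃ m, (myParent P c)^[m] x = v}).ncard ≤ F.card := by
    intro F hF
    calc ({x : RV k n | ∃ m, (myParent P c)^[m] x = v}).ncard
        ≤ (↑F : Set (RV k n)).ncard :=
          Set.ncard_le_ncard (hsub.trans hF) F.finite_toSet
      _ = F.card := Set.ncard_coe_finset F
  show ({x : RV k n | ∃ m, (myParent P c)^[m] x = v}).ncard ≤ energy k n p S v
  rcases v with _ | (b | (i | (i | j)))
  · exact absurd rfl hv
  · rcases b with _ | _
    · -- row-2 false node
      refine le_trans (key (insert (Sum.inr (Sum.inl false))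
          ((Finset.univ.image (fun i : Fin k => (Sum.inr (Sum.inr (Sum.inl i)) : RV k n))) ∪
           (Pᶜ.image (fun i : Fin k => (Sum.inr (Sum.inr (Sum.inr (Sum.inl i))) : RV k n))))) ?_) ?_
      · intro x hx
        rcases x with _ | (b | (i' | (i' | j')))
        · simp [ancSet] at hx
        · simp [ancSet] at hx; subst hx; simp
        · simp
        · by_cases h : i' ∈ P
          · simp [ancSet, h] at hx
          · simp [h]
        · simp [ancSet] at hx
      · refine le_trans (Finset.card_insert_le _ _) ?_
        have h1 := Finset.card_union_le
          ((Finset.univ.image (fun i : Fin k => (Sum.inr (Sum.inr (Sum.inl i)) : RV k n))))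
          ((Pᶜ.image (fun i : Fin k => (Sum.inr (Sum.inr (Sum.inr (Sum.inl i))) : RV k n))))
        have h2 := Finset.card_image_le (s := (Finset.univ : Finset (Fin k)))
          (f := fun i : Fin k => (Sum.inr (Sum.inr (Sum.inl i)) : RV k n))
        have h3 := Finset.card_image_le (s := Pᶜ)
          (f := fun i : Fin k => (Sum.inr (Sum.inr (Sum.inr (Sum.inl i))) : RV k n))
        have h4 : (Pᶜ : Finset (Fin k)).card = k - p := by
          rw [Finset.card_compl, hPcard, Fintype.card_fin]
        simp only [Finset.card_univ, Fintype.card_fin] at h2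
        simp only [energy]
        omega
    · -- row-2 true node
      refine le_trans (key (insert (Sum.inr (Sum.inl true))
          ((P.image (fun i : Fin k => (Sum.inr (Sum.inr (Sum.inr (Sum.inl i))) : RV k n))) ∪
           (Finset.univ.image (fun j : Fin n => (Sum.inr (Sum.inr (Sum.inr (Sum.inr j))) : RV k n))))) ?_) ?_
      · intro x hx
        rcases x with _ | (b | (i' | (i' | j')))
        · simp [ancSet] at hx
        · simp [ancSet] at hx; subst hx; simp
        · simp [ancSet] at hx
        · by_cases h : i' ∈ P
          · simp [h]
          · simp [ancSet, h] at hx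
        · simp
      · refine le_trans (Finset.card_insert_le _ _) ?_
        have h1 := Finset.card_union_le
          (P.image (fun i : Fin k => (Sum.inr (Sum.inr (Sum.inr (Sum.inl i))) : RV k n)))
          ((Finset.univ.image (fun j : Fin n => (Sum.inr (Sum.inr (Sum.inr (Sum.inr j))) : RV k n))))
        have h2 := Finset.card_image_le (s := P)
          (f := fun i : Fin k => (Sum.inr (Sum.inr (Sum.inr (Sum.inl i))) : RV k n))
        have h3 := Finset.card_image_le (s := (Finset.univ : Finset (Fin n)))
          (f := fun j : Fin n => (Sum.inr (Sum.inr (Sum.inr (Sum.inr j))) : RV k n))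
        simp only [Finset.card_univ, Fintype.card_fin] at h3
        simp only [energy]
        omega
  · -- row-3 node i
    refine le_trans (key ({Sum.inr (Sum.inr (Sum.inl i)),
        Sum.inr (Sum.inr (Sum.inr (Sum.inl i)))} : Finset (RV k n)) ?_) ?_
    · intro x hx
      rcases x with _ | (b | (i' | (i' | j')))
      · simp [ancSet] at hx
      · simp [ancSet] at hx
      · simp [ancSet] at hx; subst hx; simp
      · by_cases h : i' ∈ P
        · simp [ancSet, h] at hx
        · simp [ancSet, h] at hx; subst hx; simp
      · simp [ancSet] at hx
    · simp only [energy]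
      exact le_trans (Finset.card_insert_le _ _) (by simp)
  · -- set node i
    refine le_trans (key (insert (Sum.inr (Sum.inr (Sum.inr (Sum.inl i))))
        ((S i).image (fun j : Fin n => (Sum.inr (Sum.inr (Sum.inr (Sum.inr j))) : RV k n)))) ?_) ?_
    · intro x hx
      rcases x with _ | (b | (i' | (i' | j')))
      · simp [ancSet] at hx
      · simp [ancSet] at hx
      · simp [ancSet] at hx
      · by_cases h : i' ∈ P
        · simp [ancSet, h] at hx; subst hx; simp
        · simp [ancSet, h] at hx; subst hx; simp
      · simp [ancSet] at hx
        subst hx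
        simp [hcS j']
    · refine le_trans (Finset.card_insert_le _ _) ?_
      have h2 := Finset.card_image_le (s := S i)
        (f := fun j : Fin n => (Sum.inr (Sum.inr (Sum.inr (Sum.inr j))) : RV k n))
      simp only [energy]
      omega
  · -- element node j
    refine le_trans (key ({Sum.inr (Sum.inr (Sum.inr (Sum.inr j)))} : Finset (RV k n)) ?_) ?_
    · intro x hx
      rcases x with _ | (b | (i' | (i' | j')))
      · simp [ancSet] at hx
      · simp [ancSet] at hx
      · simp [ancSet] at hx
      · by_cases h : i' ∈ P <;> simp [ancSet, h] at hx
      · simp [ancSet] at hx; subst hx; simp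
    · simp [energy]
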